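/- arXiv:0809.3725 — 6 statements merged into one kernel-verified Lean document; each statement's English description precedes it below -/
import Mathlib

section
/- If a universal cycle for k-subsets of [n] exists (a cyclic sequence over [n] in which every k-subset appears exactly once as a window of k consecutive entries), then n divides the binomial coefficient C(n,k). -/
/-!
Every window of a universal cycle is a `k`-subset, so its `k` entries are distinct. Counting the
pairs (window, position in the window) at which a symbol `x` occurs then shows that `k` times the
number of occurrences of `x` equals the number of windows containing `x`, i.e. the number
`C(n-1, k-1)` of `k`-subsets containing `x`. Hence every symbol occurs equally often, and the
`C(n,k)` positions split into `n` classes of the same size.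
-/

/-- An `(n,k)`-universal cycle: a cyclic sequence of length `C(n,k)` over the
alphabet `Fin n` in which every `k`-subset of `Fin n` appears exactly once as the
set of entries of a window of `k` consecutive positions. -/
def IsUcycle (n k : ℕ) (S : ZMod (n.choose k) → Fin n) : Prop :=
  ∀ A : Finset (Fin n), A.card = k →
    ∃! i : ZMod (n.choose k),
      (Finset.univ.image fun j : Fin k => S (i + (j : ℕ))) = A

open Finset Function

theorem card_filter_apply_eq_of_injective {ι α : Type*} [Fintype ι] [DecidableEq α] {f : ι → α}
    (hf : Injective f) (x : α) : #{j | f j = x} = if x ∈ univ.image f then 1 else 0 := by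
  split_ifs with hx
  · obtain ⟨j, -, rfl⟩ := mem_image.1 hx
    exact card_eq_one.2 ⟨j, by ext; simp [hf.eq_iff]⟩
  · simp only [mem_image, mem_univ, true_and, not_exists] at hx
    simp [hx]

theorem card_filter_mem_image_add {G ι α : Type*} [AddGroup G] [Fintype G] [Fintype ι]
    [DecidableEq α] (S : G → α) (d : ι → G) (hS : ∀ i, Injective fun j => S (i + d j)) (x : α) :
    #{i | x ∈ univ.image fun j => S (i + d j)} = Fintype.card ι * #{p | S p = x} := by
  calc #{i | x ∈ univ.image fun j => S (i + d j)}
      = ∑ i, #{j | S (i + d j) = x} := by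
        simp only [card_filter, card_filter_apply_eq_of_injective (hS _)]
    _ = ∑ j, ∑ i, if S (i + d j) = x then 1 else 0 := by
        simp only [card_filter]
        exact sum_comm
    _ = ∑ _j : ι, #{p | S p = x} := by
        refine sum_congr rfl fun j _ => ?_
        rw [card_filter]
        exact Fintype.sum_equiv (Equiv.addRight (d j)) _ (fun p => if S p = x then 1 else 0)
          fun _ => rfl
    _ = Fintype.card ι * #{p | S p = x} := by simp

def cyclicWindow {N : ℕ} {α : Type*} [DecidableEq α] (S : ZMod N → α) (k : ℕ) (i : ZMod N) :
    Finset α :=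
  univ.image fun j : Fin k => S (i + (j : ℕ))

namespace IsUcycle

variable {n k : ℕ} {S : ZMod (n.choose k) → Fin n} [NeZero (n.choose k)]

theorem card_window (hS : IsUcycle n k S) (i : ZMod (n.choose k)) :
    #(cyclicWindow S k i) = k := by
  let start : {A : Finset (Fin n) // #A = k} → ZMod (n.choose k) :=
    fun A => (hS A A.2).exists.choose
  have window_start : ∀ A, cyclicWindow S k (start A) = A :=
    fun A => (hS A A.2).exists.choose_spec
  have start_injective : Injective start := fun A B hAB =>
    Subtype.ext (by rw [← window_start A, hAB, window_start])
  -- both sides have `C(n,k)` elements, so the injection `start` is onto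
  have start_surjective : Surjective start :=
    ((Fintype.bijective_iff_injective_and_card start).2
      ⟨start_injective, by simp [Fintype.card_finset_len, ZMod.card]⟩).2
  obtain ⟨A, rfl⟩ := start_surjective i
  rw [window_start]
  exact A.2

theorem injective_window (hS : IsUcycle n k S) (i : ZMod (n.choose k)) :
    Injective fun j : Fin k => S (i + (j : ℕ)) := by
  have hcard : #(univ.image fun j : Fin k => S (i + (j : ℕ))) = #(univ : Finset (Fin k)) := by
    simpa [cyclicWindow] using hS.card_window i
  simpa using card_image_iff.1 hcard

theorem card_filter_mem_window (hS : IsUcycle n k S) (x : Fin n) :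
    #{i | x ∈ cyclicWindow S k i} = #{A ∈ powersetCard k univ | x ∈ A} := by
  refine card_nbij (cyclicWindow S k) ?_ ?_ ?_
  · intro i hi
    exact mem_filter.2 ⟨mem_powersetCard_univ.2 (hS.card_window i), (mem_filter.1 hi).2⟩
  · intro i _ j _ hij
    exact (hS _ (hS.card_window i)).unique rfl hij.symm
  · intro A hA
    obtain ⟨hAk, hxA⟩ := mem_filter.1 hA
    obtain ⟨i, hi, -⟩ := hS A (mem_powersetCard_univ.1 hAk)
    refine ⟨i, mem_filter.2 ⟨mem_univ i, ?_⟩, hi⟩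
    rwa [cyclicWindow, hi]

theorem mul_card_fiber (hS : IsUcycle n k S) (hk : 0 < k) (x : Fin n) :
    k * #{p | S p = x} = (n - 1).choose (k - 1) := by
  have hcount := card_filter_mem_image_add S (fun j : Fin k => ((j : ℕ) : ZMod (n.choose k)))
    hS.injective_window x
  rw [Fintype.card_fin] at hcount
  change #{i | x ∈ cyclicWindow S k i} = k * _ at hcount
  rw [← hcount, hS.card_filter_mem_window x]
  simpa using card_filter_powersetCard_subset {x} univ k (subset_univ _) (by rwa [card_singleton])

end IsUcycle

theorem ucycle_exists_imp_dvd_general (n k : ℕ) (hk : 0 < k)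
    (h : ∃ S : ZMod (n.choose k) → Fin n, IsUcycle n k S) :
    n ∣ n.choose k := by
  obtain ⟨S, hS⟩ := h
  obtain hN | hN := eq_or_ne (n.choose k) 0
  · rw [hN]
    exact dvd_zero n
  have : NeZero (n.choose k) := ⟨hN⟩
  have hfiber (x : Fin n) : #{p | S p = x} = (n - 1).choose (k - 1) / k := by
    rw [← hS.mul_card_fiber hk x, Nat.mul_div_cancel_left _ hk]
  refine ⟨(n - 1).choose (k - 1) / k, ?_⟩
  calc n.choose k = #(univ : Finset (ZMod (n.choose k))) := by rw [card_univ, ZMod.card]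
    _ = ∑ x : Fin n, #{p | S p = x} := card_eq_sum_card_fiberwise fun p _ => mem_univ (S p)
    _ = n * ((n - 1).choose (k - 1) / k) := by simp [hfiber]

theorem ucycle_exists_imp_dvd (n k : ℕ) (hk : 0 < k) (hkn : k ≤ n)
    (h : ∃ S : ZMod (n.choose k) → Fin n, IsUcycle n k S) :
    n ∣ n.choose k :=
  ucycle_exists_imp_dvd_general n k hk h
end

section
/- If the form of a k-subset S of Z/nZ has at least one entry occurring exactly once (a 'good' form), then the orbit of S under translation by Z/nZ has exactly n elements; i.e., all n translates S + c (c ∈ Z/nZ) are distinct. -/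
/-! A translation fixing `S` permutes its elements and preserves gaps, so it must fix the
unique element with a given gap; hence only the zero translation fixes `S`, and the `n`
translates of `S` are pairwise distinct. -/

/-- The cyclic gap of `S ⊆ ℤ/nℤ` at a point `x`: the least positive `d` with
`x + d ∈ S`.  The form of `S` is the cyclic sequence of gaps at its elements. -/
noncomputable def gap {n : ℕ} (S : Finset (ZMod n)) (x : ZMod n) : ℕ :=
  sInf {d : ℕ | 0 < d ∧ x + (d : ZMod n) ∈ S}

open Finset

section Translate

variable {G : Type*} [AddGroup G] [DecidableEq G]

lemma Finset.image_add_right_image_add_right (S : Finset G) (a b : G) :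
    (S.image (· + a)).image (· + b) = S.image (· + (a + b)) := by
  simp only [image_image, Function.comp_def, add_assoc]

lemma Finset.injective_image_add_right_of_stabilizer {S : Finset G}
    (hstab : ∀ c, S.image (· + c) = S → c = 0) :
    Function.Injective fun c => S.image (· + c) := by
  intro a b (hab : S.image (· + a) = S.image (· + b))
  have hfix : S.image (· + (a + -b)) = S := by
    rw [← image_add_right_image_add_right, hab, image_add_right_image_add_right,
      add_neg_cancel]
    simp
  exact eq_of_add_neg_eq_zero (hstab _ hfix)

end Translate

lemma gap_image_add_right {n : ℕ} (S : Finset (ZMod n)) (x c : ZMod n) :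
    gap (S.image (· + c)) (x + c) = gap S x := by
  unfold gap
  congr! 4 with d
  rw [add_right_comm, (add_left_injective c).mem_finset_image]

lemma eq_zero_of_image_add_right_eq_self {n : ℕ} {S : Finset (ZMod n)} {s : ZMod n}
    (hs : s ∈ S) (hunique : ∀ s' ∈ S, gap S s' = gap S s → s' = s) {c : ZMod n}
    (hc : S.image (· + c) = S) : c = 0 := by
  have hgap : gap S (s + c) = gap S s := by
    simpa only [hc] using gap_image_add_right S s c
  have hsc : s + c ∈ S := hc ▸ mem_image_of_mem _ hs
  exact add_eq_left.mp (hunique _ hsc hgap)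

theorem good_form_n_translates_general (n : ℕ) [NeZero n] (S : Finset (ZMod n))
    (hgood : ∃ s ∈ S, ∀ s' ∈ S, gap S s' = gap S s → s' = s) :
    (Finset.univ.image fun c : ZMod n => S.image (· + c)).card = n := by
  obtain ⟨s, hs, hunique⟩ := hgood
  have hinj := injective_image_add_right_of_stabilizer fun _ hc =>
    eq_zero_of_image_add_right_eq_self hs hunique hc
  rw [card_image_of_injective _ hinj, card_univ, ZMod.card]

/-- If the form of a `k`-subset `S` of `ℤ/nℤ` has an entry occurring exactly once
(a good form), then all `n` translates of `S` are distinct, i.e. the translation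
orbit of `S` has exactly `n` elements. -/
theorem good_form_n_translates (n k : ℕ) [NeZero n] (S : Finset (ZMod n))
    (hcard : S.card = k)
    (hgood : ∃ s ∈ S, ∀ s' ∈ S, gap S s' = gap S s → s' = s) :
    (Finset.univ.image fun c : ZMod n => S.image (· + c)).card = n :=
  good_form_n_translates_general n S hgood
end

section
/- Asymptotically almost all partitions of k are good: the number of partitions of k with all parts at least 2 equals p(k) − p(k−1), and (p(k) − p(k−1))/p(k) → 0 as k → ∞. -/
/-!
Deleting one part `1` is a bijection from the partitions of `k` that contain `1` onto the
partitions of `k - 1`; this gives the identity.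

For the limit fix `t ≥ 1`, put `L = t² + t` and let `k ≥ 6L²`. Pairs `(λ, j)` with `λ ⊢ k`
without ones and `j < t` inject into the partitions of `k`, so at most a fraction `1 / t` of
them have no ones. The image of `(λ, j)` breaks some of the mass of `λ` into ones, and the
number `w` of ones tells how:
* `w < t`: the largest part `M` exceeds the next one `M₂` by at least `t`; split `j` ones off `M`;
* `t ≤ w < L`: `M - M₂ < t` and `M ≥ L`; merge `M` and `M₂` and split off
  `w = t (M - M₂ + 1) + j` ones, which records both `M - M₂` and `j`;
* `w ≥ L`: all parts are `< L`, so some value `v` occurs `m` times with `m v ≥ k / L ≥ 6L`;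
  replace these `m` copies by two parts `2L + j`, `L + v` (larger than all others) and ones.
-/

open Filter Multiset

lemma Multiset.sup_mem_of_ne_zero {α : Type*} [LinearOrder α] [OrderBot α] {s : Multiset α}
    (hs : s ≠ 0) : s.sup ∈ s := by
  obtain ⟨a, ha, h⟩ := s.toFinset.exists_mem_eq_sup (toFinset_nonempty.2 hs) id
  rw [Finset.sup_def, toFinset_val, map_id, sup_dedup] at h
  exact h ▸ mem_toFinset.1 ha

namespace OnesCode

def recover (t L w K : ℕ) (ν : Multiset ℕ) : Multiset ℕ × ℕ :=
  if w < t then ((K + w) ::ₘ ν, w)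
  else if w < L then
    let g := w / t - 1
    (((K + w - g) / 2 + g) ::ₘ ((K + w - g) / 2) ::ₘ ν, w % t)
  else
    let v := ν.sup - L
    (replicate ((w + K + ν.sup) / v) v + ν.erase ν.sup, K - 2 * L)

def decode (t L : ℕ) (μ : Multiset ℕ) : Multiset ℕ × ℕ :=
  let ν := μ.filter (2 ≤ ·)
  recover t L (μ.count 1) ν.sup (ν.erase ν.sup)

variable {t L : ℕ}

lemma recover_of_lt {w : ℕ} (K : ℕ) (ν : Multiset ℕ) (hw : w < t) :
    recover t L w K ν = ((K + w) ::ₘ ν, w) := by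
  rw [recover, if_pos hw]

lemma recover_merge {M M₂ j : ℕ} (ν : Multiset ℕ) (hj : j < t) (hle : M₂ ≤ M)
    (hgap : M - M₂ < t) (hL : t * t + t ≤ L) (hb : t * (M - M₂ + 1) + j ≤ M + M₂) :
    recover t L (t * (M - M₂ + 1) + j) (M + M₂ - (t * (M - M₂ + 1) + j)) ν
      = (M ::ₘ M₂ ::ₘ ν, j) := by
  set g := M - M₂
  have ht : 0 < t := by omega
  have hdiv : (t * (g + 1) + j) / t = g + 1 := by
    rw [Nat.mul_add_div ht, Nat.div_eq_of_lt hj, add_zero]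
  have hmod : (t * (g + 1) + j) % t = j := by
    rw [Nat.mul_add_mod, Nat.mod_eq_of_lt hj]
  have hlt : t * (g + 1) + j < L := by nlinarith
  have hsplit : (M + M₂ - (t * (g + 1) + j) + (t * (g + 1) + j) - g) / 2 = M₂ := by omega
  rw [recover, if_neg (by nlinarith), if_pos hlt]
  simp only [hdiv, hmod, Nat.add_sub_cancel, hsplit]
  congr
  omega

lemma recover_replace {v m j : ℕ} {F : Multiset ℕ} (hF : ∀ i ∈ F, i ≤ L) (hv : 0 < v)
    (hvL : v ≤ L) (htL : t ≤ L) (hm : 2 * L + j + (L + v) + L ≤ m * v) :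
    recover t L (m * v - (2 * L + j + (L + v))) (2 * L + j) ((L + v) ::ₘ F)
      = (replicate m v + F, j) := by
  have hsup : ((L + v) ::ₘ F).sup = L + v := by
    rw [sup_cons, sup_eq_left, Multiset.sup_le]
    exact fun i hi => (hF i hi).trans (Nat.le_add_right L v)
  have htotal : m * v - (2 * L + j + (L + v)) + (2 * L + j) + (L + v) = m * v := by omega
  rw [recover, if_neg (by omega), if_neg (by omega), hsup, htotal, erase_cons_head,
    Nat.add_sub_cancel_left]
  dsimp only
  rw [Nat.mul_div_cancel _ hv, Nat.add_sub_cancel_left]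

lemma decode_replicate_add_cons {w K : ℕ} {ν : Multiset ℕ} (hK : 2 ≤ K) (hν : ∀ i ∈ ν, 2 ≤ i)
    (hle : ν.sup ≤ K) : decode t L (replicate w 1 + K ::ₘ ν) = recover t L w K ν := by
  have hcount : count 1 (K ::ₘ ν) = 0 :=
    count_eq_zero.2 fun h => by have := (mem_cons.1 h).elim (fun h => h ▸ hK) (hν 1); omega
  have hfilter : (replicate w 1 + K ::ₘ ν).filter (2 ≤ ·) = K ::ₘ ν := by
    rw [filter_add, filter_eq_nil.2 fun a ha => by rw [eq_of_mem_replicate ha]; omega,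
      zero_add, filter_eq_self]
    exact fun i hi => (mem_cons.1 hi).elim (fun h => h ▸ hK) (hν i)
  have hsup : (K ::ₘ ν).sup = K := by rw [sup_cons, sup_eq_left.2 hle]
  rw [decode, hfilter, hsup, count_add, hcount, count_replicate_self, add_zero, erase_cons_head]

def HasCode (t L : ℕ) (s : Multiset ℕ) (j : ℕ) : Prop :=
  ∃ μ : Multiset ℕ, (∀ i ∈ μ, 0 < i) ∧ μ.sum = s.sum ∧ decode t L μ = (s, j)

lemma hasCode_of_recover_eq {s : Multiset ℕ} {j w K : ℕ} {ν : Multiset ℕ} (hK : 2 ≤ K)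
    (hν : ∀ i ∈ ν, 2 ≤ i) (hle : ν.sup ≤ K) (hsum : w + (K + ν.sum) = s.sum)
    (h : recover t L w K ν = (s, j)) : HasCode t L s j := by
  refine ⟨replicate w 1 + K ::ₘ ν, fun i hi => ?_, ?_, ?_⟩
  · rcases mem_add.1 hi with hi | hi
    · rw [eq_of_mem_replicate hi]; exact Nat.one_pos
    · exact (mem_cons.1 hi).elim (fun h => by omega) (fun h => by have := hν i h; omega)
  · rw [sum_add, sum_cons, sum_replicate, smul_eq_mul, mul_one, hsum]
  · rw [decode_replicate_add_cons hK hν hle, h]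

lemma hasCode_cons_of_sup_add_le {M j : ℕ} {R : Multiset ℕ} (hR : ∀ i ∈ R, 2 ≤ i)
    (hgap : R.sup + t ≤ M) (hj : j < t) (hM : j + 2 ≤ M) : HasCode t L (M ::ₘ R) j := by
  refine hasCode_of_recover_eq (w := j) (K := M - j) (by omega) hR (by omega)
    (by rw [sum_cons]; omega) ?_
  rw [recover_of_lt _ _ hj, Nat.sub_add_cancel (by omega)]

lemma hasCode_cons_cons_of_sub_lt {M M₂ j : ℕ} {R : Multiset ℕ} (hR : ∀ i ∈ R, 2 ≤ i)
    (hM₂ : 2 ≤ M₂) (hRM₂ : R.sup ≤ M₂) (hle : M₂ ≤ M) (hgap : M - M₂ < t) (hj : j < t)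
    (hL : t * t + t ≤ L) (hLM : L ≤ M) : HasCode t L (M ::ₘ M₂ ::ₘ R) j := by
  have hb : t * (M - M₂ + 1) + j < L := by nlinarith
  refine hasCode_of_recover_eq (w := t * (M - M₂ + 1) + j)
    (K := M + M₂ - (t * (M - M₂ + 1) + j)) (by omega) hR (by omega)
    (by rw [sum_cons, sum_cons]; omega) ?_
  exact recover_merge R hj hle hgap hL (by omega)

lemma exists_mem_sum_le_mul_count_mul {s : Multiset ℕ} (hs : s ≠ 0) (hsL : ∀ i ∈ s, i < L) :
    ∃ v ∈ s, s.sum ≤ L * (count v s * v) := by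
  obtain ⟨v, hv, hmax⟩ :=
    s.toFinset.exists_max_image (fun a => count a s * a) (toFinset_nonempty.2 hs)
  refine ⟨v, mem_toFinset.1 hv, ?_⟩
  have hcard : s.toFinset.card ≤ L := by
    simpa using Finset.card_le_card fun a ha => Finset.mem_range.2 (hsL a (mem_toFinset.1 ha))
  calc s.sum = ∑ a ∈ s.toFinset, count a s * a := by
        simpa only [smul_eq_mul] using Finset.sum_multiset_count s
    _ ≤ s.toFinset.card * (count v s * v) := by
        simpa only [smul_eq_mul] using Finset.sum_le_card_nsmul _ _ _ hmax
    _ ≤ L * (count v s * v) := Nat.mul_le_mul_right _ hcard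

lemma hasCode_of_forall_lt {s : Multiset ℕ} {j : ℕ} (hs : ∀ i ∈ s, 2 ≤ i)
    (hsL : ∀ i ∈ s, i < L) (hj : j < t) (htL : t ≤ L) (hn : 6 * L * L ≤ s.sum) :
    HasCode t L s j := by
  have hs0 : s ≠ 0 := by rintro rfl; simp at hn; omega
  obtain ⟨v, hv, hvs⟩ := exists_mem_sum_le_mul_count_mul hs0 hsL
  have hv2 := hs v hv
  have hvL := hsL v hv
  have hm : 6 * L ≤ count v s * v := Nat.le_of_mul_le_mul_left (by nlinarith) (by omega : 0 < L)
  set F := s.filter (· ≠ v)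
  have hsplit : replicate (count v s) v + F = s := by
    rw [← filter_eq', filter_add_not]
  have hsum : (replicate (count v s) v).sum + F.sum = s.sum := by rw [← sum_add, hsplit]
  rw [sum_replicate, smul_eq_mul] at hsum
  refine hasCode_of_recover_eq (w := count v s * v - (2 * L + j + (L + v))) (K := 2 * L + j)
    (ν := (L + v) ::ₘ F) (by omega) ?_ ?_ (by rw [sum_cons]; omega) ?_
  · intro i hi
    exact (mem_cons.1 hi).elim (fun h => by omega) (fun h => hs i (mem_of_mem_filter h))
  · refine Multiset.sup_le.2 fun i hi => (mem_cons.1 hi).elim (fun h => by omega) fun h => ?_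
    have := hsL i (mem_of_mem_filter h); omega
  · rw [recover_replace (fun i hi => (hsL i (mem_of_mem_filter hi)).le) (by omega) hvL.le htL
      (by omega), hsplit]

theorem hasCode {s : Multiset ℕ} {j : ℕ} (hs : ∀ i ∈ s, 2 ≤ i) (hj : j < t)
    (hL : t * t + t ≤ L) (hn : 6 * L * L ≤ s.sum) : HasCode t L s j := by
  by_cases hM : L ≤ s.sup
  · have hs0 : s ≠ 0 := by rintro rfl; rw [sup_zero, Nat.bot_eq_zero] at hM; nlinarith
    have hR : ∀ i ∈ s.erase s.sup, 2 ≤ i := fun i hi => hs i (mem_of_mem_erase hi)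
    rw [← cons_erase (sup_mem_of_ne_zero hs0)]
    by_cases hgap : (s.erase s.sup).sup + t ≤ s.sup
    · exact hasCode_cons_of_sup_add_le hR hgap hj (by nlinarith)
    · have hR0 : s.erase s.sup ≠ 0 := by
        rintro h; rw [h, sup_zero, Nat.bot_eq_zero] at hgap; nlinarith
      have hle : (s.erase s.sup).sup ≤ s.sup := sup_mono (erase_subset _ _)
      rw [← cons_erase (sup_mem_of_ne_zero hR0)]
      exact hasCode_cons_cons_of_sub_lt (fun i hi => hR i (mem_of_mem_erase hi))
        (hR _ (sup_mem_of_ne_zero hR0)) (sup_mono (erase_subset _ _)) hle (by omega) hj hL hM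
  · exact hasCode_of_forall_lt hs (fun i hi => by have := le_sup hi; omega) hj (by nlinarith) hn

end OnesCode

open scoped Finset

namespace Nat.Partition

def withoutOnes (n : ℕ) : Finset n.Partition := {p | ∀ i ∈ p.parts, 2 ≤ i}

lemma one_mem_parts_iff {n : ℕ} (p : n.Partition) : 1 ∈ p.parts ↔ ¬ ∀ i ∈ p.parts, 2 ≤ i := by
  refine ⟨fun h1 h => absurd (h 1 h1) (by norm_num),
    fun h => by_contra fun h1 => h fun i hi => ?_⟩
  have : i ≠ 1 := fun e => h1 (e ▸ hi)
  have := p.parts_pos hi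
  omega

lemma card_withoutOnes_add_card_pred {n : ℕ} (hn : 0 < n) :
    #(withoutOnes n) + Fintype.card (n - 1).Partition = Fintype.card n.Partition := by
  have hones :
      Fintype.card (n - 1).Partition = #{p : n.Partition | ¬ ∀ i ∈ p.parts, 2 ≤ i} := by
    rw [← Fintype.card_subtype, ← Fintype.card_congr (partitionWithPartEquiv le_rfl hn)]
    exact Fintype.card_congr (Equiv.subtypeEquivRight one_mem_parts_iff)
  rw [hones, withoutOnes, Finset.card_filter_add_card_filter_not, Finset.card_univ]

theorem card_withoutOnes_mul_le {n t L : ℕ} (hL : t * t + t ≤ L) (hn : 6 * L * L ≤ n) :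
    #(withoutOnes n) * t ≤ Fintype.card n.Partition := by
  set S := withoutOnes n ×ˢ Finset.range t
  have hinj : Set.InjOn (fun x : n.Partition × ℕ => (x.1.parts, x.2)) S := fun x _ y _ h => by
    simp only [Prod.mk.injEq] at h
    exact Prod.ext (Nat.Partition.ext h.1) h.2
  calc #(withoutOnes n) * t = #(S.image fun x => (x.1.parts, x.2)) := by
        rw [Finset.card_image_of_injOn hinj, Finset.card_product, Finset.card_range]
    _ ≤ #(Finset.univ : Finset n.Partition) :=
        Finset.card_le_card_of_surjOn (fun μ => OnesCode.decode t L μ.parts) ?_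
    _ = Fintype.card n.Partition := Finset.card_univ
  intro x hx
  obtain ⟨⟨p, j⟩, hpj, rfl⟩ := Finset.mem_image.1 hx
  rw [Finset.mem_product, withoutOnes, Finset.mem_filter, Finset.mem_range] at hpj
  obtain ⟨μ, hpos, hsum, hdec⟩ := OnesCode.hasCode hpj.1.2 hpj.2 hL (by rwa [p.parts_sum])
  exact ⟨⟨μ, fun hi => hpos _ hi, hsum.trans p.parts_sum⟩, Finset.mem_coe.2 (Finset.mem_univ _),
    hdec⟩

theorem tendsto_card_withoutOnes_div_card :
    Tendsto (fun n => (#(withoutOnes n) : ℝ) / Fintype.card n.Partition) atTop (nhds 0) := by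
  refine tendsto_order.2 ⟨fun a ha => Eventually.of_forall fun n => ha.trans_le (by positivity),
    fun ε hε => ?_⟩
  obtain ⟨t, ht⟩ := exists_nat_one_div_lt hε
  set L := (t + 1) * (t + 1) + (t + 1)
  filter_upwards [eventually_ge_atTop (6 * L * L)] with n hn
  have hbound : (#(withoutOnes n) : ℝ) * (t + 1) ≤ 1 * Fintype.card n.Partition := by
    rw [one_mul]
    exact_mod_cast card_withoutOnes_mul_le le_rfl hn
  refine lt_of_le_of_lt ?_ ht
  rwa [div_le_div_iff₀ (by exact_mod_cast Fintype.card_pos) (by positivity)]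

end Nat.Partition

/-- Almost all partitions are good: the number of partitions of `k` with all
parts at least `2` equals `p(k) - p(k-1)`, and this is a vanishing proportion of
all partitions as `k → ∞`. -/
theorem bad_patterns_negligible :
    (∀ k : ℕ, 0 < k →
      (Finset.univ.filter fun p : Nat.Partition k => ∀ i ∈ p.parts, 2 ≤ i).card =
        Fintype.card (Nat.Partition k) - Fintype.card (Nat.Partition (k - 1))) ∧
    Tendsto
      (fun k : ℕ =>
        ((Fintype.card (Nat.Partition k) -
            Fintype.card (Nat.Partition (k - 1)) : ℕ) : ℝ) /
          (Fintype.card (Nat.Partition k) : ℝ))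
      atTop (nhds 0) := by
  have hcard : ∀ k, 0 < k → #(Nat.Partition.withoutOnes k) =
      Fintype.card (Nat.Partition k) - Fintype.card (Nat.Partition (k - 1)) := fun k hk => by
    have := Nat.Partition.card_withoutOnes_add_card_pred hk
    omega
  refine ⟨hcard, Nat.Partition.tendsto_card_withoutOnes_div_card.congr' ?_⟩
  filter_upwards [eventually_gt_atTop 0] with k hk
  rw [hcard k hk]
end

section
/- (Schur's theorem on denumerants) Let p_1, ..., p_t be positive integers with gcd(p_1,...,p_t) = 1 and let Q = p_1·p_2·...·p_t. Then the number ψ(n) of solutions (x_1,...,x_t) in nonnegative integers to p_1 x_1 + ... + p_t x_t = n satisfies ψ(n) ~ n^{t−1}/((t−1)!·Q) as n → ∞. -/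
/-!
Let `Φ(m)` count the solutions of `∑ p i * x i ≤ m`. Writing `y i = p i * q i + r i` with
`r i < p i` compares `Φ` with the unit-weight count, a binomial coefficient by stars and bars:
`C(m + t, t) ≤ Q Φ(m) ≤ C(m + P + t, t)` with `Q = ∏ p i` and `P = ∑ (p i - 1)`.
Since the gcd is `1`, every `n ≥ N` is representable, so `ψ(m) ≤ ψ(m')` whenever `m' - m ≥ N`.
Hence `h ψ(n)` is squeezed between sums of `ψ` over windows of length `h`, i.e. differences of
`Φ`, and the binomial bounds give these up to `P` terms `C(n + c, t - 1) ~ n ^ (t - 1) / (t - 1)!`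
out of `h ± P`. So the normalized `ψ(n)` eventually lies between roughly `1 - P / h` and
`1 + P / h` for every fixed `h`, and letting `h → ∞` gives the limit.
-/

open Filter Finset Topology Asymptotics

namespace Denumerant

variable {t : ℕ}

def sols (p : Fin t → ℕ) (n : ℕ) : Finset (Fin t → ℕ) :=
  {x ∈ Fintype.piFinset fun _ => range (n + 1) | ∑ i, p i * x i = n}

def solsLe (p : Fin t → ℕ) (n : ℕ) : Finset (Fin t → ℕ) :=
  {x ∈ Fintype.piFinset fun _ => range (n + 1) | ∑ i, p i * x i ≤ n}

section Membership

variable {p : Fin t → ℕ} (hp : ∀ i, 0 < p i)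
include hp

theorem le_of_sum_mul_le {x : Fin t → ℕ} {n : ℕ} (h : ∑ i, p i * x i ≤ n) (i : Fin t) :
    x i ≤ n :=
  calc x i ≤ p i * x i := Nat.le_mul_of_pos_left _ (hp i)
    _ ≤ ∑ j, p j * x j :=
      single_le_sum (f := fun j => p j * x j) (fun _ _ => Nat.zero_le _) (mem_univ i)
    _ ≤ n := h

theorem mem_sols {x : Fin t → ℕ} {n : ℕ} : x ∈ sols p n ↔ ∑ i, p i * x i = n := by
  simp only [sols, mem_filter, Fintype.mem_piFinset, mem_range, Nat.lt_succ_iff]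
  exact ⟨And.right, fun h => ⟨le_of_sum_mul_le hp h.le, h⟩⟩

theorem mem_solsLe {x : Fin t → ℕ} {n : ℕ} : x ∈ solsLe p n ↔ ∑ i, p i * x i ≤ n := by
  simp only [solsLe, mem_filter, Fintype.mem_piFinset, mem_range, Nat.lt_succ_iff]
  exact ⟨And.right, fun h => ⟨le_of_sum_mul_le hp h, h⟩⟩

theorem natCard_eq_card_sols (n : ℕ) :
    Nat.card {x : Fin t → ℕ // ∑ i, p i * x i = n} = (sols p n).card := by
  rw [← Nat.card_eq_finsetCard]
  exact Nat.card_congr (Equiv.subtypeEquivRight fun _ => (mem_sols hp).symm)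

end Membership

def sumLeEquivSumEq (t m : ℕ) :
    {x : Fin t → ℕ // ∑ i, x i ≤ m} ≃ {y : Fin (t + 1) → ℕ // ∑ i, y i = m} where
  toFun x := ⟨Fin.cons (m - ∑ i, x.1 i) x.1, by rw [Fin.sum_cons]; have := x.2; omega⟩
  invFun y := ⟨Fin.tail y.1, by
    have := y.2
    rw [Fin.sum_univ_succ] at this
    simp only [Fin.tail]
    omega⟩
  left_inv x := by ext; simp
  right_inv y := by
    obtain ⟨y, hy⟩ := y
    rw [Fin.sum_univ_succ] at hy
    ext i
    refine Fin.cases ?_ (fun j => ?_) i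
    · simp only [Fin.cons_zero, Fin.tail]
      omega
    · rfl

theorem card_solsLe_one (t m : ℕ) : (solsLe (fun _ : Fin t => 1) m).card = (m + t).choose t := by
  rw [← Nat.card_eq_finsetCard,
    Nat.card_congr ((Equiv.subtypeEquivRight fun _ => by simp [mem_solsLe fun _ => one_pos]).trans
      ((sumLeEquivSumEq t m).trans (Sym.equivNatSumOfFintype _ m).symm)),
    Nat.card_eq_fintype_card, Sym.card_sym_eq_choose, Fintype.card_fin,
    Nat.add_right_comm, Nat.add_sub_cancel, add_comm t m, Nat.choose_symm_add]

theorem card_solsLe_product_residues (p : Fin t → ℕ) (m : ℕ) :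
    (solsLe p m ×ˢ Fintype.piFinset fun i => range (p i)).card =
      (∏ i, p i) * (solsLe p m).card := by
  rw [card_product, Fintype.card_piFinset]
  simp only [card_range, Nat.mul_comm]

section Counting

variable {p : Fin t → ℕ} (hp : ∀ i, 0 < p i)
include hp

/-- Division with remainder by `p i` in each coordinate embeds the solutions of `∑ y ≤ m` into
the pairs (solution of `∑ p x ≤ m`, residue vector); `(x, r) ↦ p x + r` embeds them back
into the solutions of `∑ y ≤ m + ∑ (p i - 1)`. -/
theorem choose_le_prod_mul_card_solsLe (m : ℕ) :
    (m + t).choose t ≤ (∏ i, p i) * (solsLe p m).card := by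
  rw [← card_solsLe_one t m, ← card_solsLe_product_residues]
  refine card_le_card_of_injOn (fun y => (fun i => y i / p i, fun i => y i % p i)) ?_ ?_
  · intro y hy
    rw [mem_coe, mem_solsLe fun _ => one_pos] at hy
    simp only [mem_coe, mem_product, mem_solsLe hp, Fintype.mem_piFinset, mem_range]
    refine ⟨le_trans (sum_le_sum fun i _ => ?_) (by simpa using hy), fun i => Nat.mod_lt _ (hp i)⟩
    exact Nat.mul_div_le (y i) (p i)
  · intro y _ z _ hyz
    simp only [Prod.mk.injEq] at hyz
    funext i
    rw [← Nat.div_add_mod (y i) (p i), ← Nat.div_add_mod (z i) (p i),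
      congrFun hyz.1 i, congrFun hyz.2 i]

theorem prod_mul_card_solsLe_le_choose (m : ℕ) :
    (∏ i, p i) * (solsLe p m).card ≤ (m + ∑ i, (p i - 1) + t).choose t := by
  rw [← card_solsLe_one t, ← card_solsLe_product_residues]
  refine card_le_card_of_injOn (fun xr i => p i * xr.1 i + xr.2 i) ?_ ?_
  · rintro ⟨x, r⟩ hxr
    simp only [mem_coe, mem_product, mem_solsLe hp, Fintype.mem_piFinset, mem_range] at hxr
    rw [mem_coe, mem_solsLe fun _ => one_pos]
    simp only [one_mul, sum_add_distrib]
    exact add_le_add hxr.1 (sum_le_sum fun i _ => Nat.le_sub_one_of_lt (hxr.2 i))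
  · rintro ⟨x, r⟩ hxr ⟨y, s⟩ hys hxy
    simp only [mem_coe, mem_product, Fintype.mem_piFinset, mem_range] at hxr hys
    have hi (i : Fin t) := congrFun hxy i
    simp only at hi
    refine Prod.ext (funext fun i => ?_) (funext fun i => ?_)
    · simpa [Nat.mul_add_div (hp i), Nat.div_eq_of_lt (hxr.2 i), Nat.div_eq_of_lt (hys.2 i)]
        using congrArg (· / p i) (hi i)
    · simpa [Nat.mod_eq_of_lt (hxr.2 i), Nat.mod_eq_of_lt (hys.2 i)]
        using congrArg (· % p i) (hi i)

theorem card_solsLe_eq_sum (n : ℕ) :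
    (solsLe p n).card = ∑ m ∈ range (n + 1), (sols p m).card := by
  have hmaps : ∀ x ∈ solsLe p n, ∑ i, p i * x i ∈ range (n + 1) := fun x hx =>
    mem_range.mpr (Nat.lt_succ_of_le ((mem_solsLe hp).mp hx))
  rw [card_eq_sum_card_fiberwise hmaps]
  refine sum_congr rfl fun m hm => congrArg card (ext fun x => ?_)
  simp only [mem_filter, mem_solsLe hp, mem_sols hp]
  exact ⟨And.right, fun h => ⟨h.le.trans (Nat.lt_succ_iff.mp (mem_range.mp hm)), h⟩⟩

theorem card_solsLe_add (a h : ℕ) :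
    (solsLe p (a + h)).card = (solsLe p a).card + ∑ j ∈ range h, (sols p (a + 1 + j)).card := by
  rw [card_solsLe_eq_sum hp, card_solsLe_eq_sum hp, Nat.add_right_comm, sum_range_add]

theorem card_sols_le_card_sols_add {m : ℕ} (hm : (sols p m).Nonempty) (n : ℕ) :
    (sols p n).card ≤ (sols p (n + m)).card := by
  obtain ⟨y, hy⟩ := hm
  refine card_le_card_of_injOn (· + y) (fun x hx => ?_) (fun x _ z _ h => add_right_cancel h)
  simp only [mem_coe, mem_sols hp] at hx hy ⊢
  simp only [Pi.add_apply, mul_add, sum_add_distrib, hx, hy]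

theorem exists_forall_ge_sols_nonempty (hgcd : univ.gcd p = 1) :
    ∃ N, ∀ n ≥ N, (sols p n).Nonempty := by
  obtain ⟨N, hN⟩ := Nat.exists_mem_closure_of_ge (Set.range p)
  have hone : Nat.setGcd (Set.range p) = 1 :=
    Nat.dvd_one.mp (hgcd ▸ dvd_gcd fun i _ => Nat.setGcd_dvd_of_mem (Set.mem_range_self i))
  refine ⟨N, fun n hn => ?_⟩
  obtain ⟨x, hx⟩ := AddSubmonoid.mem_closure_range_iff_of_fintype.mp (hN n hn (hone ▸ one_dvd n))
  exact ⟨x, (mem_sols hp).mpr (by simp [hx, mul_comm])⟩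

end Counting

theorem choose_add_eq_choose_add_sum (a d : ℕ) {s : ℕ} (hs : 0 < s) :
    (a + d).choose s = a.choose s + ∑ j ∈ range d, (a + j).choose (s - 1) := by
  obtain ⟨s, rfl⟩ : ∃ s', s = s' + 1 := ⟨s - 1, by omega⟩
  induction d with
  | zero => simp
  | succ d ih =>
    rw [← add_assoc, Nat.choose_succ_succ, ih, sum_range_succ, Nat.add_sub_cancel]
    ring

section Window

variable {p : Fin t → ℕ} (hp : ∀ i, 0 < p i) {N : ℕ} (hN : ∀ n ≥ N, (sols p n).Nonempty)
include hp hN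

theorem card_sols_le_of_add_le {m n : ℕ} (h : m + N ≤ n) : (sols p m).card ≤ (sols p n).card := by
  simpa [Nat.add_sub_cancel' (show m ≤ n by omega)] using
    card_sols_le_card_sols_add hp (hN (n - m) (by omega)) m

theorem prod_mul_card_sols_le_sum_choose (ht : 0 < t) (n h : ℕ) :
    (∏ i, p i) * (h * (sols p n).card) ≤
      ∑ j ∈ range (h + ∑ i, (p i - 1)), (n + N + t + j).choose (t - 1) := by
  have hwindow : h * (sols p n).card ≤ ∑ j ∈ range h, (sols p (n + N + 1 + j)).card := by
    simpa using card_nsmul_le_sum (range h) _ _ fun j _ => card_sols_le_of_add_le hp hN (by omega)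
  have hlow := choose_le_prod_mul_card_solsLe hp (n + N)
  have hhigh := prod_mul_card_solsLe_le_choose hp (n + N + h)
  rw [card_solsLe_add hp, mul_add, add_right_comm _ _ t, add_right_comm _ h t, add_assoc _ h,
    choose_add_eq_choose_add_sum _ _ ht] at hhigh
  linarith [Nat.mul_le_mul_left (∏ i, p i) hwindow]

theorem sum_choose_le_prod_mul_card_sols (ht : 0 < t) {h : ℕ} (hh : ∑ i, (p i - 1) ≤ h)
    (k : ℕ) :
    ∑ j ∈ range (h - ∑ i, (p i - 1)), (k + ∑ i, (p i - 1) + t + j).choose (t - 1) ≤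
      (∏ i, p i) * (h * (sols p (k + h + N)).card) := by
  have hwindow : ∑ j ∈ range h, (sols p (k + 1 + j)).card ≤ h * (sols p (k + h + N)).card := by
    simpa using sum_le_card_nsmul (range h) _ _ fun j hj =>
      card_sols_le_of_add_le hp hN (by rw [mem_range] at hj; omega)
  have hlow := choose_le_prod_mul_card_solsLe hp (k + h)
  have hhigh := prod_mul_card_solsLe_le_choose hp k
  rw [card_solsLe_add hp, mul_add,
    show k + h + t = k + ∑ i, (p i - 1) + t + (h - ∑ i, (p i - 1)) by omega,
    choose_add_eq_choose_add_sum _ _ ht] at hlow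
  linarith [Nat.mul_le_mul_left (∏ i, p i) hwindow]

end Window

theorem isEquivalent_choose_mul_factorial {a : ℕ → ℕ} {c : ℝ}
    (ha : ∀ᶠ n in atTop, (a n : ℝ) = n + c) (s : ℕ) :
    (fun n => ((a n).choose s : ℝ) * s.factorial) ~[atTop] fun n => (n : ℝ) ^ s := by
  have hshift (b : ℝ) : (fun n : ℕ => (n : ℝ) + b) ~[atTop] fun n => (n : ℝ) :=
    IsEquivalent.refl.add_const_of_norm_tendsto_atTop
      (tendsto_norm_atTop_atTop.comp tendsto_natCast_atTop_atTop)
  have hprod := IsEquivalent.finsetProd (s := range s) fun i _ => hshift (c - i)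
  simp only [prod_const, card_range] at hprod
  refine hprod.congr_left (ha.mono fun n hn => ?_)
  dsimp only
  rw [Nat.cast_choose_eq_descPochhammer_div, div_mul_cancel₀ _ (by positivity),
    descPochhammer_eval_eq_prod_range, hn]
  simp only [add_sub_assoc]

theorem tendsto_choose_div_pow {a : ℕ → ℕ} {c : ℝ} (ha : ∀ᶠ n in atTop, (a n : ℝ) = n + c)
    (s : ℕ) :
    Tendsto (fun n => ((a n).choose s : ℝ) / ((n : ℝ) ^ s / s.factorial)) atTop (𝓝 1) := by
  have hdiv := (isEquivalent_choose_mul_factorial ha s).div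
    (IsEquivalent.refl (u := fun n : ℕ => (n : ℝ) ^ s))
  have hone : Tendsto (fun n : ℕ => (n : ℝ) ^ s / (n : ℝ) ^ s) atTop (𝓝 1) :=
    tendsto_const_nhds.congr' <| (eventually_ne_atTop 0).mono fun n hn =>
      (div_self (by positivity)).symm
  exact (hdiv.symm.tendsto_nhds hone).congr fun n => by simp [div_div_eq_mul_div]

theorem tendsto_sum_choose_div_pow {a : ℕ → ℕ} {c : ℝ} (ha : ∀ᶠ n in atTop, (a n : ℝ) = n + c)
    (s L : ℕ) :
    Tendsto (fun n => ((∑ j ∈ range L, (a n + j).choose s : ℕ) : ℝ) / ((n : ℝ) ^ s / s.factorial))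
      atTop (𝓝 L) := by
  have hj (j : ℕ) : ∀ᶠ n in atTop, ((a n + j : ℕ) : ℝ) = n + (c + j) :=
    ha.mono fun n hn => by push_cast; rw [hn]; ring
  simpa [sum_div] using tendsto_finsetSum (range L) fun j _ => tendsto_choose_div_pow (hj j) s

theorem tendsto_of_squeeze_family {α ι β : Type*} [TopologicalSpace β] [LinearOrder β]
    [OrderTopology β] {f : Filter α} {g : Filter ι} [g.NeBot] {F : α → β} {L U : ι → β} {b : β}
    (hL : Tendsto L g (𝓝 b)) (hU : Tendsto U g (𝓝 b))
    (hlo : ∀ᶠ i in g, ∃ lo : α → β, Tendsto lo f (𝓝 (L i)) ∧ ∀ᶠ x in f, lo x ≤ F x)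
    (hhi : ∀ᶠ i in g, ∃ hi : α → β, Tendsto hi f (𝓝 (U i)) ∧ ∀ᶠ x in f, F x ≤ hi x) :
    Tendsto F f (𝓝 b) := by
  refine tendsto_order.2 ⟨fun a ha => ?_, fun a ha => ?_⟩
  · obtain ⟨i, hai, lo, hlim, hle⟩ := ((hL.eventually (lt_mem_nhds ha)).and hlo).exists
    filter_upwards [hlim.eventually (lt_mem_nhds hai), hle] with x h₁ h₂ using h₁.trans_le h₂
  · obtain ⟨i, hai, hi, hlim, hle⟩ := ((hU.eventually (gt_mem_nhds ha)).and hhi).exists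
    filter_upwards [hlim.eventually (gt_mem_nhds hai), hle] with x h₁ h₂ using h₂.trans_lt h₁

noncomputable def normalizedCard (p : Fin t → ℕ) (n : ℕ) : ℝ :=
  ((∏ i, p i) * (sols p n).card : ℕ) / ((n : ℝ) ^ (t - 1) / (t - 1).factorial)

section Bounds

variable {p : Fin t → ℕ} (hp : ∀ i, 0 < p i) {N : ℕ} (hN : ∀ n ≥ N, (sols p n).Nonempty)
  (ht : 0 < t)
include hp hN ht

theorem exists_lower_bound_normalizedCard {h : ℕ} (hh : ∑ i, (p i - 1) < h) :
    ∃ lo : ℕ → ℝ, Tendsto lo atTop (𝓝 (1 - (∑ i, (p i - 1) : ℕ) / h)) ∧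
      ∀ᶠ n in atTop, lo n ≤ normalizedCard p n := by
  set P := ∑ i, (p i - 1)
  have hlim : ((h - P : ℕ) : ℝ) / h = 1 - P / h := by
    rw [Nat.cast_sub hh.le, sub_div, div_self (Nat.cast_ne_zero.mpr (by omega))]
  refine ⟨fun n => ((∑ j ∈ range (h - P), (n - (h + N) + P + t + j).choose (t - 1) : ℕ) : ℝ)
      / ((n : ℝ) ^ (t - 1) / (t - 1).factorial) / h,
    hlim ▸ (tendsto_sum_choose_div_pow (c := P + t - (h + N : ℕ)) ?_ _ _).div_const _, ?_⟩
  · filter_upwards [eventually_ge_atTop (h + N)] with n hn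
    push_cast [Nat.cast_sub hn]
    ring
  · filter_upwards [eventually_ge_atTop (h + N)] with n hn
    have hbound := sum_choose_le_prod_mul_card_sols hp hN ht hh.le (n - (h + N))
    rw [show n - (h + N) + h + N = n by omega] at hbound
    rw [normalizedCard, div_right_comm]
    refine div_le_div_of_nonneg_right ?_ (by positivity)
    rw [div_le_iff₀ (Nat.cast_pos.mpr (by omega))]
    exact_mod_cast hbound.trans_eq (by ring)

theorem exists_upper_bound_normalizedCard {h : ℕ} (hh : 0 < h) :
    ∃ hi : ℕ → ℝ, Tendsto hi atTop (𝓝 (1 + (∑ i, (p i - 1) : ℕ) / h)) ∧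
      ∀ᶠ n in atTop, normalizedCard p n ≤ hi n := by
  set P := ∑ i, (p i - 1)
  have hlim : ((h + P : ℕ) : ℝ) / h = 1 + P / h := by
    rw [Nat.cast_add, add_div, div_self (Nat.cast_ne_zero.mpr hh.ne')]
  refine ⟨fun n => ((∑ j ∈ range (h + P), (n + N + t + j).choose (t - 1) : ℕ) : ℝ)
      / ((n : ℝ) ^ (t - 1) / (t - 1).factorial) / h,
    hlim ▸ (tendsto_sum_choose_div_pow (c := N + t) ?_ _ _).div_const _,
    Eventually.of_forall fun n => ?_⟩
  · exact Eventually.of_forall fun n => by push_cast; ring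
  · dsimp only
    rw [normalizedCard, div_right_comm]
    refine div_le_div_of_nonneg_right ?_ (by positivity)
    rw [le_div_iff₀ (Nat.cast_pos.mpr hh)]
    exact_mod_cast (prod_mul_card_sols_le_sum_choose hp hN ht n h).trans_eq' (by ring)

end Bounds

end Denumerant

open Denumerant

/-- Schur's theorem on denumerants: for fixed positive integers `p 1, …, p t`
with gcd `1` and `Q = ∏ p j`, the number of nonnegative integer solutions of
`∑ p j * x j = n` is asymptotic to `n^(t-1) / ((t-1)! · Q)` as `n → ∞`. -/
theorem schur_denumerant (t : ℕ) (ht : 0 < t) (p : Fin t → ℕ)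
    (hp : ∀ i, 0 < p i) (hgcd : Finset.univ.gcd p = 1) :
    Tendsto
      (fun n : ℕ =>
        (Nat.card {x : Fin t → ℕ // ∑ i, p i * x i = n} : ℝ) /
          ((n : ℝ) ^ (t - 1) / ((t - 1).factorial * ∏ i, (p i : ℝ))))
      atTop (nhds 1) := by
  obtain ⟨N, hN⟩ := exists_forall_ge_sols_nonempty hp hgcd
  have hratio (n : ℕ) : (Nat.card {x : Fin t → ℕ // ∑ i, p i * x i = n} : ℝ) /
      ((n : ℝ) ^ (t - 1) / ((t - 1).factorial * ∏ i, (p i : ℝ))) = normalizedCard p n := by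
    rw [natCard_eq_card_sols hp, normalizedCard]
    push_cast
    rw [div_div_eq_mul_div, div_div_eq_mul_div]
    ring
  have hPh := tendsto_const_div_atTop_nhds_zero_nat (𝕜 := ℝ) (∑ i, (p i - 1) : ℕ)
  simp_rw [hratio]
  exact tendsto_of_squeeze_family (by simpa using hPh.const_sub 1) (by simpa using hPh.const_add 1)
    ((eventually_gt_atTop _).mono fun _ hh => exists_lower_bound_normalizedCard hp hN ht hh)
    ((eventually_gt_atTop 0).mono fun _ hh => exists_upper_bound_normalizedCard hp hN ht hh)
end

section
/- Let ⟨p_1,...,p_t⟩ be a bad pattern of k (all p_i ≥ 2) and ⟨p_1,...,p_{t−1}, p_t−1, 1⟩ its associated good pattern. The number of cyclic arrangements (forms) per class of the bad pattern is (k−1)!/(p_1!···p_t!), while for the good pattern it is (k−1)!/(p_1!···p_{t−1}!·(p_t−1)!·1!); the ratio of good forms per class to bad forms per class is p_t ≥ 2. -/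
open Nat

theorem div_mul_factorial_pred_eq {K : Type*} [Field K] [CharZero K] (N A : K) {m : ℕ}
    (hm : 0 < m) : N / (A * (m - 1)! : K) = m * (N / ((m ! : K) * A)) := by
  have hm' : (m : K) ≠ 0 := by exact_mod_cast hm.ne'
  rw [← Nat.mul_factorial_pred hm.ne', Nat.cast_mul, mul_assoc, ← mul_div_assoc,
    mul_div_mul_left _ _ hm', mul_comm A]

/-- For a bad pattern `⟨p 1, …, p t⟩` of `k` (all multiplicities at least `2`)
and its associated good pattern `⟨p 1, …, p (t-1), p t - 1, 1⟩`, the number of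
forms per class, `(k-1)!/(p 1! ⋯ p t!)` for the bad pattern and
`(k-1)!/(p 1! ⋯ p (t-1)! · (p t - 1)! · 1!)` for the good pattern, are in ratio
`p t ≥ 2` (good to bad). -/
theorem forms_per_class_ratio (t k : ℕ) (ht : 0 < t) (p : Fin t → ℕ)
    (hp : ∀ i, 2 ≤ p i) :
    (2 ≤ p ⟨t - 1, by omega⟩) ∧
    ((k - 1).factorial : ℚ) /
        ((∏ i ∈ Finset.univ.erase (⟨t - 1, by omega⟩ : Fin t),
            ((p i).factorial : ℚ)) *
          ((p ⟨t - 1, by omega⟩ - 1).factorial : ℚ) * (Nat.factorial 1 : ℚ)) =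
      (p ⟨t - 1, by omega⟩ : ℚ) *
        (((k - 1).factorial : ℚ) / ∏ i, ((p i).factorial : ℚ)) := by
  set j : Fin t := ⟨t - 1, by omega⟩
  have hpj : 2 ≤ p j := hp j
  refine ⟨hpj, ?_⟩
  rw [Nat.factorial_one, Nat.cast_one, mul_one,
    ← Finset.mul_prod_erase Finset.univ _ (Finset.mem_univ j)]
  exact div_mul_factorial_pred_eq _ _ (by omega)
end

section
/- Define κ on classes with t distinct values c_1 < ... < c_{t−1} and largest singleton c_t > 1 (multiplicities p_1,...,p_{t−1},1) by κ(C) = [1, c_1^{p_1}, ..., c_{t−1}^{p_{t−1}−1}; c_t + c_{t−1} − 1]. Then κ preserves the weighted sum Σ p_i c_i = n, and iterating κ at most k−1 times from any awesome class (good class whose largest singleton exceeds 1) reaches the class [1^{k−1}; n−k+1]. -/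
/-!
Each application of `κ` to an awesome class that is not yet terminal merges its largest
singleton `v` with the largest remaining entry `c ≥ 2` into `v + c - 1`, and adds an entry `1`.
The new value exceeds every other entry, so it is again the largest singleton and exceeds `1`:
the class stays awesome, keeps its size and sum, and gains one entry equal to `1`. Since the
largest singleton is never `1`, at most `k - 1` entries can equal `1`, so after at most `k - 1`
steps all entries but the largest singleton are `1`, and size and sum then determine the class.
-/

/-- The largest value occurring exactly once in the multiset `M`
(the largest singleton of the class), or `0` if there is none. -/
noncomputable def largestSingleton (M : Multiset ℕ) : ℕ :=
  sSup {v : ℕ | M.count v = 1}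

/-- The map `κ` on classes: remove the largest singleton `m` and one copy of the
largest remaining value `c`, and add the entries `1` and `m + c - 1`. -/
noncomputable def kappa (M : Multiset ℕ) : Multiset ℕ :=
  let m := largestSingleton M
  let c := sSup {v : ℕ | v ∈ M.erase m}
  1 ::ₘ (m + c - 1) ::ₘ ((M.erase m).erase c)

open Multiset

namespace Multiset

noncomputable def maxEntry (s : Multiset ℕ) : ℕ :=
  sSup {x | x ∈ s}

theorem le_maxEntry {s : Multiset ℕ} {x : ℕ} (hx : x ∈ s) : x ≤ s.maxEntry :=
  le_csSup s.finite_toSet.bddAbove hx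

theorem maxEntry_mem {s : Multiset ℕ} (hs : s ≠ 0) : s.maxEntry ∈ s :=
  Nat.sSup_mem (exists_mem_of_ne_zero hs) s.finite_toSet.bddAbove

@[simp]
theorem maxEntry_zero : maxEntry 0 = 0 := by
  simp [maxEntry]

theorem one_lt_maxEntry {s : Multiset ℕ} (hpos : ∀ x ∈ s, 0 < x) (h : ∃ x ∈ s, x ≠ 1) :
    1 < s.maxEntry := by
  obtain ⟨x, hx, hx1⟩ := h
  have := hpos x hx
  have := le_maxEntry hx
  omega

end Multiset

def IsLargestSingleton (M : Multiset ℕ) (v : ℕ) : Prop :=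
  M.count v = 1 ∧ ∀ w ∈ M, M.count w = 1 → w ≤ v

namespace IsLargestSingleton

variable {M : Multiset ℕ} {v : ℕ}

theorem mem (hv : IsLargestSingleton M v) : v ∈ M :=
  count_pos.mp (hv.1 ▸ one_pos)

theorem largestSingleton_eq (hv : IsLargestSingleton M v) : largestSingleton M = v :=
  IsGreatest.csSup_eq
    ⟨hv.1, fun w (hw : M.count w = 1) => hv.2 w (count_pos.mp (hw ▸ one_pos)) hw⟩

theorem kappa_eq (hv : IsLargestSingleton M v) :
    kappa M =
      1 ::ₘ (v + (M.erase v).maxEntry - 1) ::ₘ (M.erase v).erase (M.erase v).maxEntry := by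
  rw [kappa, hv.largestSingleton_eq]
  rfl

end IsLargestSingleton

section Kappa

variable {M : Multiset ℕ} {v : ℕ}

theorem sum_kappa (hv : IsLargestSingleton M v) (hv0 : 0 < v) : (kappa M).sum = M.sum := by
  rw [hv.kappa_eq]
  conv_rhs => rw [← cons_erase hv.mem]
  rcases eq_or_ne (M.erase v) 0 with hs | hs
  · simp only [hs, maxEntry_zero, erase_zero, sum_cons, sum_zero]
    omega
  · rw [sum_cons, sum_cons, sum_cons, ← sum_erase (maxEntry_mem hs)]
    omega

theorem pos_of_mem_kappa (hv : IsLargestSingleton M v) (hv1 : 1 < v) (hpos : ∀ x ∈ M, 0 < x) :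
    ∀ x ∈ kappa M, 0 < x := by
  rw [hv.kappa_eq]
  intro x hx
  rcases mem_cons.mp hx with rfl | hx
  · exact one_pos
  rcases mem_cons.mp hx with rfl | hx
  · omega
  · exact hpos x (mem_of_mem_erase (mem_of_mem_erase hx))

theorem isLargestSingleton_one_cons {w : ℕ} {rest : Multiset ℕ} (hw : 1 < w)
    (hrest : ∀ x ∈ rest, x < w) : IsLargestSingleton (1 ::ₘ w ::ₘ rest) w := by
  refine ⟨?_, fun x hx _ => ?_⟩
  · rw [count_cons_of_ne hw.ne', count_cons_self,
      count_eq_zero.mpr fun h => (hrest w h).false]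
  · rcases mem_cons.mp hx with rfl | hx
    · exact hw.le
    rcases mem_cons.mp hx with rfl | hx
    · exact le_rfl
    · exact (hrest x hx).le

theorem isLargestSingleton_kappa (hv : IsLargestSingleton M v) (hv1 : 1 < v)
    (hc : 1 < (M.erase v).maxEntry) :
    IsLargestSingleton (kappa M) (v + (M.erase v).maxEntry - 1) := by
  rw [hv.kappa_eq]
  refine isLargestSingleton_one_cons (by omega) fun x hx => ?_
  have := le_maxEntry (mem_of_mem_erase hx)
  omega

theorem card_kappa (hv : IsLargestSingleton M v) (hs : M.erase v ≠ 0) :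
    card (kappa M) = card M := by
  rw [hv.kappa_eq, card_cons, card_cons, card_erase_add_one (maxEntry_mem hs),
    card_erase_add_one hv.mem]

theorem count_one_kappa (hv : IsLargestSingleton M v) (hv1 : 1 < v)
    (hc : 1 < (M.erase v).maxEntry) : count 1 (kappa M) = count 1 M + 1 := by
  rw [hv.kappa_eq, count_cons_self, count_cons_of_ne (by omega), count_erase_of_ne hc.ne,
    count_erase_of_ne hv1.ne]

end Kappa

theorem eq_replicate_add_singleton_of_forall_erase_eq_one {M : Multiset ℕ} {v : ℕ}
    (hv : v ∈ M) (hv0 : 0 < v) (h1 : ∀ w ∈ M.erase v, w = 1) :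
    M = replicate (card M - 1) 1 + {M.sum - card M + 1} := by
  have hM : M = v ::ₘ replicate (card M - 1) 1 := by
    conv_lhs => rw [← cons_erase hv]
    rw [eq_replicate.mpr ⟨by rw [card_erase_of_mem hv, Nat.pred_eq_sub_one], h1⟩]
  have hsum : M.sum = v + (card M - 1) := by
    conv_lhs => rw [hM]
    rw [sum_cons, sum_replicate, smul_eq_mul, mul_one]
  have hcard : 0 < card M := card_pos_iff_exists_mem.mpr ⟨v, hv⟩
  rw [hsum, show v + (card M - 1) - card M + 1 = v by omega, add_comm, singleton_add]
  exact hM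

theorem exists_iterate_kappa_eq_replicate_add_singleton {M : Multiset ℕ} {v : ℕ}
    (hv : IsLargestSingleton M v) (hv1 : 1 < v) (hpos : ∀ x ∈ M, 0 < x) :
    ∃ j ≤ card M - 1 - count 1 M,
      kappa^[j] M = replicate (card M - 1) 1 + {M.sum - card M + 1} := by
  by_cases hterm : ∀ w ∈ M.erase v, w = 1
  · exact ⟨0, Nat.zero_le _,
      eq_replicate_add_singleton_of_forall_erase_eq_one hv.mem (by omega) hterm⟩
  push Not at hterm
  have hc := one_lt_maxEntry (fun x hx => hpos x (mem_of_mem_erase hx)) hterm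
  have hs : M.erase v ≠ 0 := fun hs => by simp [hs] at hc
  have hv' := isLargestSingleton_kappa hv hv1 hc
  have hcard := card_kappa hv hs
  have hcount := count_one_kappa hv hv1 hc
  have hlt : count 1 (kappa M) < card (kappa M) :=
    (count_le_card 1 _).lt_of_ne fun h => by
      have := count_eq_card.mp h _ hv'.mem
      omega
  obtain ⟨j, hj, hjM⟩ := exists_iterate_kappa_eq_replicate_add_singleton hv' (by omega)
    (pos_of_mem_kappa hv hv1 hpos)
  refine ⟨j + 1, by omega, ?_⟩
  rwa [Function.iterate_succ_apply, ← hcard, ← sum_kappa hv (by omega)]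
termination_by card M - 1 - count 1 M
decreasing_by omega

/-- `κ` preserves the total sum `n` of a class, and iterating `κ` at most
`k - 1` times from any awesome class (a class whose largest singleton exceeds
`1`) reaches the class `[1^(k-1); n-k+1]`. -/
theorem kappa_reaches_terminal_class (n k : ℕ) (M : Multiset ℕ)
    (hcard : Multiset.card M = k) (hsum : M.sum = n)
    (hpos : ∀ v ∈ M, 0 < v)
    (hawesome : ∃ v ∈ M, M.count v = 1 ∧ 1 < v ∧
      ∀ w ∈ M, M.count w = 1 → w ≤ v) :
    (kappa M).sum = n ∧
    ∃ j ≤ k - 1, kappa^[j] M =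
      Multiset.replicate (k - 1) 1 + {n - k + 1} := by
  obtain ⟨v, -, hvc, hv1, hmax⟩ := hawesome
  have hv : IsLargestSingleton M v := ⟨hvc, hmax⟩
  subst hcard hsum
  refine ⟨sum_kappa hv (by omega), ?_⟩
  obtain ⟨j, hj, hjM⟩ := exists_iterate_kappa_eq_replicate_add_singleton hv hv1 hpos
  exact ⟨j, hj.trans (Nat.sub_le _ _), hjM⟩
end
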